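/- arXiv:2010.00892 — 2 statements merged into one kernel-verified Lean document; each statement's English description precedes it below -/
import Mathlib

section
/- Let f_1, …, f_n : ℝ^d → ℝ each be convex and differentiable with L_max-Lipschitz gradient, let f(x) = (1/n)∑_{i=1}^n f_i(x) be μ-strongly convex with μ > 0, and let x⋆ be the minimizer of f (so ∇f(x⋆) = 0). Then for any stepsize 0 < γ ≤ 1/L_max and any x ∈ ℝ^d, the one-step expected squared distance of the SGD⋆ update satisfies (1/n)∑_{i=1}^n ‖x − γ(∇f_i(x) − ∇f_i(x⋆)) − x⋆‖² ≤ (1 − γμ)‖x − x⋆‖². -/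
open InnerProductSpace

section aux
variable {E : Type*} [NormedAddCommGroup E] [InnerProductSpace ℝ E] [CompleteSpace E]

local notation "⟪" x ", " y "⟫" => @inner ℝ _ _ x y

lemma line_hasDerivAt' {f : E → ℝ} (hf : Differentiable ℝ f) (x d : E) (t : ℝ) :
    HasDerivAt (fun s : ℝ => f (x + s • d)) ⟪gradient f (x + t • d), d⟫ t := by
  have hline : HasDerivAt (fun s : ℝ => x + s • d) d t := by
    simpa using ((hasDerivAt_id t).smul_const d).const_add x
  have hg : HasFDerivAt f (InnerProductSpace.toDual ℝ E (gradient f (x + t • d))) (x + t • d) :=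
    ((hf (x + t • d)).hasGradientAt).hasFDerivAt
  exact hg.comp_hasDerivAt t hline

lemma convex_first_order' {f : E → ℝ} (hc : ConvexOn ℝ Set.univ f) (hf : Differentiable ℝ f)
    (x y : E) : f x + ⟪gradient f x, y - x⟫ ≤ f y := by
  set φ : ℝ → ℝ := fun t => f (x + t • (y - x)) with hφ
  have hφc : ConvexOn ℝ Set.univ φ := by
    refine ⟨convex_univ, fun t1 _ t2 _ a b ha hb hab => ?_⟩
    have key : x + (a • t1 + b • t2) • (y - x)
        = a • (x + t1 • (y - x)) + b • (x + t2 • (y - x)) := by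
      match_scalars <;> simp only [smul_eq_mul] <;> linarith
    simp only [hφ, smul_eq_mul] at *
    rw [key]
    exact hc.2 (Set.mem_univ _) (Set.mem_univ _) ha hb hab
  have h0 : DifferentiableAt ℝ φ 0 := (line_hasDerivAt' hf x (y - x) 0).differentiableAt
  have hds := hφc.deriv_le_slope (Set.mem_univ (0:ℝ)) (Set.mem_univ (1:ℝ)) one_pos h0
  have hd0 : deriv φ 0 = ⟪gradient f x, y - x⟫ := by
    have := (line_hasDerivAt' hf x (y - x) 0).deriv
    simpa using this
  have hs : slope φ 0 1 = f y - f x := by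
    simp [slope_def_field, hφ]
  rw [hd0, hs] at hds
  linarith

lemma grad_mono' {f : E → ℝ} (hc : ConvexOn ℝ Set.univ f) (hf : Differentiable ℝ f) (x y : E) :
    0 ≤ ⟪gradient f y - gradient f x, y - x⟫ := by
  have h1 := convex_first_order' hc hf x y
  have h2 := convex_first_order' hc hf y x
  have e2 : ⟪gradient f y, x - y⟫ = -⟪gradient f y, y - x⟫ := by
    rw [← inner_neg_right]; congr 1; abel
  rw [e2] at h2
  rw [inner_sub_left]
  linarith

lemma descent' {f : E → ℝ} (hf : Differentiable ℝ f) {L : ℝ} (hL : 0 ≤ L)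
    (hlip : ∀ x y, ‖gradient f x - gradient f y‖ ≤ L * ‖x - y‖) (x y : E) :
    f y ≤ f x + ⟪gradient f x, y - x⟫ + L / 2 * ‖y - x‖ ^ 2 := by
  set d := y - x with hd
  set ψ : ℝ → ℝ := fun t => f (x + t • d) - t * ⟪gradient f x, d⟫ - L * t ^ 2 / 2 * ‖d‖ ^ 2 with hψ
  have hψd : ∀ t, HasDerivAt ψ
      (⟪gradient f (x + t • d), d⟫ - ⟪gradient f x, d⟫ - L * t * ‖d‖ ^ 2) t := by
    intro t
    have h1 := line_hasDerivAt' hf x d t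
    have h2 : HasDerivAt (fun t : ℝ => t * ⟪gradient f x, d⟫) ⟪gradient f x, d⟫ t := by
      simpa using (hasDerivAt_id t).mul_const (⟪gradient f x, d⟫)
    have h3 : HasDerivAt (fun t : ℝ => L * t ^ 2 / 2 * ‖d‖ ^ 2) (L * t * ‖d‖ ^ 2) t := by
      have h3' := (((hasDerivAt_pow 2 t).const_mul L).div_const 2).mul_const (‖d‖ ^ 2)
      exact h3'.congr_deriv (by ring)
    exact (h1.sub h2).sub h3
  have hmono : AntitoneOn ψ (Set.Icc (0:ℝ) 1) := by
    apply antitoneOn_of_deriv_nonpos (convex_Icc 0 1)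
    · exact fun t _ => ((hψd t).differentiableAt).continuousAt.continuousWithinAt
    · intro t ht
      exact ((hψd t).differentiableAt).differentiableWithinAt
    · intro t ht
      rw [interior_Icc] at ht
      rw [(hψd t).deriv]
      have hb : ⟪gradient f (x + t • d), d⟫ - ⟪gradient f x, d⟫ ≤ L * t * ‖d‖ ^ 2 := by
        rw [← inner_sub_left]
        calc ⟪gradient f (x + t • d) - gradient f x, d⟫
            ≤ ‖gradient f (x + t • d) - gradient f x‖ * ‖d‖ := real_inner_le_norm _ _
          _ ≤ (L * ‖x + t • d - x‖) * ‖d‖ :=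
              mul_le_mul_of_nonneg_right (hlip _ _) (norm_nonneg _)
          _ = L * t * ‖d‖ ^ 2 := by
              have : x + t • d - x = t • d := by abel
              rw [this, norm_smul]
              simp [abs_of_pos ht.1]
              ring
      linarith
  have hkey := hmono (Set.left_mem_Icc.mpr one_pos.le) (Set.right_mem_Icc.mpr one_pos.le) one_pos.le
  have e0 : ψ 0 = f x := by simp [hψ]
  have e1 : ψ 1 = f y - ⟪gradient f x, d⟫ - L / 2 * ‖d‖ ^ 2 := by
    have hy : x + d = y := by rw [hd]; abel
    simp [hψ, hy]; try ring
  rw [e0, e1] at hkey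
  linarith


lemma coco_half' {f : E → ℝ} (hc : ConvexOn ℝ Set.univ f) (hf : Differentiable ℝ f) {L : ℝ}
    (hL : 0 < L) (hlip : ∀ x y, ‖gradient f x - gradient f y‖ ≤ L * ‖x - y‖) (x y : E) :
    f x + ⟪gradient f x, y - x⟫ + 1 / (2 * L) * ‖gradient f y - gradient f x‖ ^ 2 ≤ f y := by
  set g := gradient f y - gradient f x with hg
  set z := y - L⁻¹ • g with hz
  have h1 := descent' hf hL.le hlip y z
  have h2 := convex_first_order' hc hf x z
  have e1 : z - y = -(L⁻¹ • g) := by rw [hz]; abel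
  have e2 : ⟪gradient f y, z - y⟫ = -(L⁻¹ * ⟪gradient f y, g⟫) := by
    rw [e1, inner_neg_right, real_inner_smul_right]
  have e3 : ‖z - y‖ ^ 2 = L⁻¹ ^ 2 * ‖g‖ ^ 2 := by
    rw [e1, norm_neg, norm_smul, mul_pow]
    simp [abs_of_pos (inv_pos.mpr hL)]
  have e4 : ⟪gradient f x, z - x⟫ = ⟪gradient f x, y - x⟫ - L⁻¹ * ⟪gradient f x, g⟫ := by
    have hzx : z - x = (y - x) - L⁻¹ • g := by rw [hz]; abel
    rw [hzx, inner_sub_right, real_inner_smul_right]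
  have e5 : L⁻¹ * ⟪gradient f y, g⟫ - L⁻¹ * ⟪gradient f x, g⟫ = L⁻¹ * ‖g‖ ^ 2 := by
    rw [← mul_sub, ← inner_sub_left, ← hg, real_inner_self_eq_norm_sq]
  have e6 : L⁻¹ * ‖g‖ ^ 2 - L / 2 * (L⁻¹ ^ 2 * ‖g‖ ^ 2) = 1 / (2 * L) * ‖g‖ ^ 2 := by
    field_simp
    ring
  rw [e2, e3] at h1
  rw [e4] at h2
  linarith

lemma coco' {f : E → ℝ} (hc : ConvexOn ℝ Set.univ f) (hf : Differentiable ℝ f) {L : ℝ}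
    (hL : 0 < L) (hlip : ∀ x y, ‖gradient f x - gradient f y‖ ≤ L * ‖x - y‖) (x y : E) :
    ‖gradient f y - gradient f x‖ ^ 2 ≤ L * ⟪gradient f y - gradient f x, y - x⟫ := by
  have h1 := coco_half' hc hf hL hlip x y
  have h2 := coco_half' hc hf hL hlip y x
  rw [norm_sub_rev] at h2
  have e2 : ⟪gradient f y, x - y⟫ = -⟪gradient f y, y - x⟫ := by
    rw [← inner_neg_right]; congr 1; abel
  rw [e2] at h2
  rw [inner_sub_left]
  have key : 1 / (2 * L) * ‖gradient f y - gradient f x‖ ^ 2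
      + 1 / (2 * L) * ‖gradient f y - gradient f x‖ ^ 2
      ≤ ⟪gradient f y, y - x⟫ - ⟪gradient f x, y - x⟫ := by linarith
  have hm := mul_le_mul_of_nonneg_left key hL.le
  have e3 : L * (1 / (2 * L) * ‖gradient f y - gradient f x‖ ^ 2
      + 1 / (2 * L) * ‖gradient f y - gradient f x‖ ^ 2) = ‖gradient f y - gradient f x‖ ^ 2 := by
    field_simp
    ring
  linarith

end aux

open scoped BigOperators

section main
variable {E : Type*} [NormedAddCommGroup E] [InnerProductSpace ℝ E] [CompleteSpace E]
local notation "⟪" x ", " y "⟫" => @inner ℝ _ _ x y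

end main



open scoped BigOperators

/-- One-step contraction of SGD⋆: under convexity, `L_max`-smoothness of each `f i`,
`μ`-strong convexity of `f`, and `0 < γ ≤ 1/L_max`, the expected squared distance of
the SGD⋆ update contracts by `(1 − γμ)`. -/
theorem sgd_star_one_step_contraction
    {d n : ℕ} (hn : 0 < n)
    (f : Fin n → EuclideanSpace ℝ (Fin d) → ℝ)
    (Lmax mu : ℝ) (hmu : 0 < mu)
    (hconv : ∀ i, ConvexOn ℝ Set.univ (f i))
    (hdiff : ∀ i, Differentiable ℝ (f i))
    (hlip : ∀ i x y, ‖gradient (f i) x - gradient (f i) y‖ ≤ Lmax * ‖x - y‖)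
    (F : EuclideanSpace ℝ (Fin d) → ℝ)
    (hF : ∀ x, F x = (1 / (n : ℝ)) * ∑ i, f i x)
    (hsc : ConvexOn ℝ Set.univ (fun x => F x - (mu / 2) * ‖x‖ ^ 2))
    (xstar : EuclideanSpace ℝ (Fin d))
    (hmin : ∀ x, F xstar ≤ F x)
    (hstar : gradient F xstar = 0)
    (gamma : ℝ) (hgamma0 : 0 < gamma) (hgamma : gamma ≤ 1 / Lmax) :
    ∀ x : EuclideanSpace ℝ (Fin d),
      (1 / (n : ℝ)) * ∑ i,
          ‖x - gamma • (gradient (f i) x - gradient (f i) xstar) - xstar‖ ^ 2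
        ≤ (1 - gamma * mu) * ‖x - xstar‖ ^ 2 := by

  intro x
  have hL : 0 < Lmax := by
    by_contra h
    push_neg at h
    have h1 : 1 / Lmax ≤ 0 := one_div_nonpos.mpr h
    linarith
  have hFe : F = fun z => (1 / (n : ℝ)) * ∑ i, f i z := funext hF
  subst hFe
  set S : EuclideanSpace ℝ (Fin d) → EuclideanSpace ℝ (Fin d) := fun z => (1 / (n : ℝ)) • ∑ i, gradient (f i) z with hS
  -- gradient of F
  have hFgrad : ∀ z : EuclideanSpace ℝ (Fin d), HasGradientAt (fun z => (1 / (n : ℝ)) * ∑ i, f i z) (S z) z := by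
    intro z
    have hsum : HasFDerivAt (fun x : EuclideanSpace ℝ (Fin d) => ∑ i, f i x)
        (∑ i, InnerProductSpace.toDual ℝ (EuclideanSpace ℝ (Fin d)) (gradient (f i) z)) z :=
      HasFDerivAt.fun_sum (fun i _ => ((hdiff i z).hasGradientAt).hasFDerivAt)
    have h := hsum.const_mul ((1 : ℝ) / n)
    rw [hasGradientAt_iff_hasFDerivAt]
    refine h.congr_fderiv ?_
    rw [hS]
    simp [map_sum]
  -- gradient of the norm-squared part
  have hnsq : ∀ z : EuclideanSpace ℝ (Fin d), HasGradientAt (fun z : EuclideanSpace ℝ (Fin d) => (mu / 2) * ‖z‖ ^ 2) (mu • z) z := by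
    intro z
    have h1 : HasFDerivAt (fun z : EuclideanSpace ℝ (Fin d) => ‖z‖ ^ 2) (2 • (innerSL ℝ z)) z := by
      simpa using (hasFDerivAt_id z).norm_sq
    have h2 := h1.const_mul (mu / 2)
    rw [hasGradientAt_iff_hasFDerivAt]
    refine h2.congr_fderiv ?_
    ext v
    simp [real_inner_smul_left, InnerProductSpace.toDual_apply_apply, two_smul]
    ring
  have hGgrad : ∀ z : EuclideanSpace ℝ (Fin d), HasGradientAt
      (fun z : EuclideanSpace ℝ (Fin d) => (1 / (n : ℝ)) * ∑ i, f i z - (mu / 2) * ‖z‖ ^ 2) (S z - mu • z) z := by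
    intro z
    rw [hasGradientAt_iff_hasFDerivAt]
    have h := (hFgrad z).hasFDerivAt.sub (hnsq z).hasFDerivAt
    refine h.congr_fderiv ?_
    simp [map_sub]
  -- strong convexity gives strong monotonicity of the gradient of F
  have hGdiff : Differentiable ℝ
      (fun z : EuclideanSpace ℝ (Fin d) => (1 / (n : ℝ)) * ∑ i, f i z - (mu / 2) * ‖z‖ ^ 2) :=
    fun z => ((hGgrad z).differentiableAt)
  have hmono := grad_mono' hsc hGdiff xstar x
  rw [(hGgrad x).gradient, (hGgrad xstar).gradient] at hmono
  have hstrong : mu * ‖x - xstar‖ ^ 2 ≤ ⟪S x - S xstar, x - xstar⟫_ℝ := by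
    have e : S x - mu • x - (S xstar - mu • xstar) = (S x - S xstar) - mu • (x - xstar) := by
      rw [smul_sub]; abel
    rw [e, inner_sub_left, real_inner_smul_left, real_inner_self_eq_norm_sq] at hmono
    linarith
  -- relate the averaged inner product to the gradient of F
  have hconn : ⟪S x - S xstar, x - xstar⟫_ℝ
      = (1 / (n : ℝ)) * ∑ i, ⟪gradient (f i) x - gradient (f i) xstar, x - xstar⟫_ℝ := by
    have e : S x - S xstar
        = (1 / (n : ℝ)) • ∑ i, (gradient (f i) x - gradient (f i) xstar) := by
      rw [hS, ← smul_sub, ← Finset.sum_sub_distrib]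
    rw [e, real_inner_smul_left, sum_inner]
  -- per-index bound
  have hper : ∀ i : Fin n,
      ‖x - gamma • (gradient (f i) x - gradient (f i) xstar) - xstar‖ ^ 2
        ≤ ‖x - xstar‖ ^ 2
          - gamma * ⟪gradient (f i) x - gradient (f i) xstar, x - xstar⟫_ℝ := by
    intro i
    set g : EuclideanSpace ℝ (Fin d) := gradient (f i) x - gradient (f i) xstar with hg
    have hco : ‖g‖ ^ 2 ≤ Lmax * ⟪g, x - xstar⟫_ℝ :=
      coco' (hconv i) (hdiff i) hL (hlip i) xstar x
    have hge : (0:ℝ) ≤ ⟪g, x - xstar⟫_ℝ := by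
      rcases le_or_gt 0 (⟪g, x - xstar⟫_ℝ) with h | h
      · exact h
      · nlinarith [sq_nonneg ‖g‖, mul_pos hL (neg_pos.mpr h)]
    have hexp : ‖x - gamma • g - xstar‖ ^ 2
        = ‖x - xstar‖ ^ 2 - 2 * gamma * ⟪g, x - xstar⟫_ℝ + gamma ^ 2 * ‖g‖ ^ 2 := by
      have e : x - gamma • g - xstar = (x - xstar) - gamma • g := by abel
      rw [e, norm_sub_sq_real, real_inner_smul_right, norm_smul, mul_pow, Real.norm_eq_abs,
        sq_abs, real_inner_comm]
      ring
    have hgl : gamma * Lmax ≤ 1 := (le_div_iff₀ hL).mp hgamma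
    have h1 := mul_le_mul_of_nonneg_left hco (sq_nonneg gamma)
    have h2 := mul_le_mul_of_nonneg_right hgl (mul_nonneg hgamma0.le hge)
    rw [hexp]
    nlinarith [h1, h2]
  have hn' : (0:ℝ) < n := Nat.cast_pos.mpr hn
  calc (1 / (n : ℝ)) * ∑ i,
          ‖x - gamma • (gradient (f i) x - gradient (f i) xstar) - xstar‖ ^ 2
      ≤ (1 / (n : ℝ)) * ∑ i, (‖x - xstar‖ ^ 2
          - gamma * ⟪gradient (f i) x - gradient (f i) xstar, x - xstar⟫_ℝ) := by
        apply mul_le_mul_of_nonneg_left (Finset.sum_le_sum (fun i _ => hper i)) (by positivity)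
    _ = ‖x - xstar‖ ^ 2 - gamma * ((1 / (n : ℝ))
          * ∑ i, ⟪gradient (f i) x - gradient (f i) xstar, x - xstar⟫_ℝ) := by
        have hgen : ∀ (A : ℝ) (T : Fin n → ℝ),
            (1 / (n : ℝ)) * ∑ i, (A - gamma * T i)
              = A - gamma * ((1 / (n : ℝ)) * ∑ i, T i) := by
          intro A T
          rw [Finset.sum_sub_distrib, Finset.sum_const, Finset.card_univ, Fintype.card_fin,
            ← Finset.mul_sum, nsmul_eq_mul]
          have hn0 : (n : ℝ) ≠ 0 := hn'.ne'
          field_simp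
        exact hgen _ _
    _ = ‖x - xstar‖ ^ 2 - gamma * ⟪S x - S xstar, x - xstar⟫_ℝ := by rw [hconn]
    _ ≤ ‖x - xstar‖ ^ 2 - gamma * (mu * ‖x - xstar‖ ^ 2) := by
        have := mul_le_mul_of_nonneg_left hstrong hgamma0.le
        linarith
    _ = (1 - gamma * mu) * ‖x - xstar‖ ^ 2 := by ring
end

section
/- Let f_1, …, f_n : ℝ^d → ℝ each be convex and differentiable with L_max-Lipschitz gradient, let f(x) = (1/n)∑_{i=1}^n f_i(x), and let x⋆ be a minimizer of f with ∇f(x⋆) = 0. Then for every x, x̄ ∈ ℝ^d, (1/n)∑_{i=1}^n ‖∇f_i(x̄) − ∇f_i(x)‖² ≤ 4 L_max (f(x) − f(x⋆) + f(x̄) − f(x⋆)). -/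
open scoped BigOperators
open InnerProductSpace

section Helpers

variable {E : Type*} [NormedAddCommGroup E] [InnerProductSpace ℝ E] [CompleteSpace E]

local notation "⟪" x ", " y "⟫" => @inner ℝ _ _ x y

lemma svrg_line_deriv (g : E → ℝ) (hg : Differentiable ℝ g) (x v : E) (t : ℝ) :
    HasDerivAt (fun s : ℝ => g (x + s • v)) ⟪gradient g (x + t • v), v⟫ t := by
  have h2 : HasFDerivAt g (toDual ℝ E (gradient g (x + t • v))) (x + t • v) :=
    ((hg _).hasGradientAt).hasFDerivAt
  have h3 : HasDerivAt (fun s : ℝ => x + s • v) v t := by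
    simpa using ((hasDerivAt_id t).smul_const v).const_add x
  have h4 := h2.comp_hasDerivAt t h3
  simp only [toDual_apply_apply] at h4
  exact h4

/-- first-order condition for convexity -/
lemma svrg_first_order (g : E → ℝ) (hconv : ConvexOn ℝ Set.univ g)
    (hg : Differentiable ℝ g) (x z : E) :
    g x + ⟪gradient g x, z - x⟫ ≤ g z := by
  set v := z - x with hv
  have hφ : ConvexOn ℝ Set.univ (fun t : ℝ => g (x + t • v)) := by
    have := hconv.comp_affineMap (AffineMap.lineMap x z)
    simp only [Set.preimage_univ] at this
    refine this.congr fun t _ => ?_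
    simp [AffineMap.lineMap_apply, hv, add_comm]
  have hd : HasDerivAt (fun t : ℝ => g (x + t • v)) ⟪gradient g x, v⟫ 0 := by
    simpa using svrg_line_deriv g hg x v 0
  have := hφ.le_slope_of_hasDerivAt (Set.mem_univ (0:ℝ)) (Set.mem_univ (1:ℝ))
    one_pos hd
  rw [slope_def_field] at this
  simp only [zero_smul, add_zero, one_smul] at this
  have hz : x + v = z := by simp [hv]
  rw [hz] at this
  linarith [this]

/-- descent lemma -/
lemma svrg_descent (g : E → ℝ) (hg : Differentiable ℝ g) (L : ℝ) (hL : 0 ≤ L)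
    (hlip : ∀ a b, ‖gradient g a - gradient g b‖ ≤ L * ‖a - b‖) (x y : E) :
    g y ≤ g x + ⟪gradient g x, y - x⟫ + L / 2 * ‖y - x‖ ^ 2 := by
  set v := y - x with hv
  have hcont : Continuous fun t : ℝ => ⟪gradient g (x + t • v), v⟫ := by
    have hgradc : Continuous (gradient g) := by
      rcases eq_or_lt_of_le hL with h0 | h0
      · have : ∀ a b : E, gradient g a = gradient g b := by
          intro a b
          have := hlip a b
          rw [← h0, zero_mul] at this
          have := le_antisymm this (norm_nonneg _)
          rwa [norm_eq_zero, sub_eq_zero] at this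
        have : gradient g = fun _ => gradient g x := funext fun a => this a x
        rw [this]; exact continuous_const
      · refine (LipschitzWith.of_dist_le_mul (K := ⟨L, hL⟩) fun a b => ?_).continuous
        rw [dist_eq_norm, dist_eq_norm]; exact hlip a b
    exact (hgradc.comp (by continuity)).inner continuous_const
  have key : g (x + (1:ℝ) • v) - g (x + (0:ℝ) • v)
      = ∫ t in (0:ℝ)..1, ⟪gradient g (x + t • v), v⟫ :=
    (intervalIntegral.integral_eq_sub_of_hasDerivAt
      (fun t _ => svrg_line_deriv g hg x v t) (hcont.intervalIntegrable 0 1)).symm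
  have hmono : ∫ t in (0:ℝ)..1, ⟪gradient g (x + t • v), v⟫
      ≤ ∫ t in (0:ℝ)..1, (⟪gradient g x, v⟫ + L * t * ‖v‖ ^ 2) := by
    have hc2 : Continuous fun t : ℝ => ⟪gradient g x, v⟫ + L * t * ‖v‖ ^ 2 := by
      continuity
    apply intervalIntegral.integral_mono_on (by norm_num)
      (hcont.intervalIntegrable 0 1) (hc2.intervalIntegrable 0 1)
    intro t ht
    have h1 : ⟪gradient g (x + t • v) - gradient g x, v⟫
        ≤ ‖gradient g (x + t • v) - gradient g x‖ * ‖v‖ := real_inner_le_norm _ _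
    have h2 : ‖gradient g (x + t • v) - gradient g x‖ ≤ L * (t * ‖v‖) := by
      have := hlip (x + t • v) x
      simpa [norm_smul, abs_of_nonneg ht.1] using this
    have h3 : ⟪gradient g (x + t • v) - gradient g x, v⟫ ≤ L * t * ‖v‖ ^ 2 := by
      calc ⟪gradient g (x + t • v) - gradient g x, v⟫
          ≤ ‖gradient g (x + t • v) - gradient g x‖ * ‖v‖ := h1
        _ ≤ L * (t * ‖v‖) * ‖v‖ := by
            apply mul_le_mul_of_nonneg_right h2 (norm_nonneg _)
        _ = L * t * ‖v‖ ^ 2 := by ring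
    have hsub : ⟪gradient g (x + t • v) - gradient g x, v⟫
        = ⟪gradient g (x + t • v), v⟫ - ⟪gradient g x, v⟫ := by
      rw [inner_sub_left]
    linarith [h3, hsub ▸ h3]
  have hcomp : ∫ t in (0:ℝ)..1, (⟪gradient g x, v⟫ + L * t * ‖v‖ ^ 2)
      = ⟪gradient g x, v⟫ + L / 2 * ‖v‖ ^ 2 := by
    have hc3 : Continuous fun t : ℝ => L * t * ‖v‖ ^ 2 := by continuity
    rw [intervalIntegral.integral_add (intervalIntegrable_const)
      (hc3.intervalIntegrable 0 1)]
    simp only [intervalIntegral.integral_const, smul_eq_mul]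
    have h4 : ∫ t in (0:ℝ)..1, L * t * ‖v‖ ^ 2 = L / 2 * ‖v‖ ^ 2 := by
      have he : (fun t : ℝ => L * t * ‖v‖ ^ 2) = fun t : ℝ => (L * ‖v‖ ^ 2) * t := by
        funext t; ring
      rw [he, intervalIntegral.integral_const_mul, integral_id]
      ring
    rw [h4]; ring
  have hx0 : x + (0:ℝ) • v = x := by simp
  have hx1 : x + (1:ℝ) • v = y := by simp [hv]
  rw [hx0, hx1] at key
  linarith [key ▸ hmono]

/-- cocoercivity-type bound -/
lemma svrg_key (g : E → ℝ) (hconv : ConvexOn ℝ Set.univ g)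
    (hg : Differentiable ℝ g) (L : ℝ) (hL : 0 < L)
    (hlip : ∀ a b, ‖gradient g a - gradient g b‖ ≤ L * ‖a - b‖) (x y : E) :
    ‖gradient g y - gradient g x‖ ^ 2 ≤ 2 * L * (g y - g x - ⟪gradient g x, y - x⟫) := by
  set w := gradient g y - gradient g x with hw
  set z := y - (1 / L) • w with hz
  have hdes := svrg_descent g hg L hL.le hlip y z
  have hfo := svrg_first_order g hconv hg x z
  have hzy : z - y = -((1/L) • w) := by rw [hz]; abel
  have e1 : ⟪gradient g y, z - y⟫ = -(1/L) * ⟪gradient g y, w⟫ := by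
    rw [hzy, inner_neg_right, real_inner_smul_right]; ring
  have e2 : ‖z - y‖ ^ 2 = (1/L)^2 * ‖w‖ ^ 2 := by
    rw [hzy, norm_neg, norm_smul, mul_pow, Real.norm_eq_abs, sq_abs]
  have e3 : ⟪gradient g x, z - x⟫ = ⟪gradient g x, y - x⟫ - (1/L) * ⟪gradient g x, w⟫ := by
    have : z - x = (y - x) - (1/L) • w := by rw [hz]; abel
    rw [this, inner_sub_right, real_inner_smul_right]
  have e4 : ⟪gradient g y, w⟫ - ⟪gradient g x, w⟫ = ‖w‖ ^ 2 := by
    rw [← inner_sub_left, ← hw, real_inner_self_eq_norm_sq]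
  have hL' : (0:ℝ) < 1/L := by positivity
  -- combine
  have comb : g x + ⟪gradient g x, y - x⟫ - (1/L) * ⟪gradient g x, w⟫
      ≤ g y - (1/L) * ⟪gradient g y, w⟫ + L/2 * ((1/L)^2 * ‖w‖^2) := by
    calc g x + ⟪gradient g x, y - x⟫ - (1/L) * ⟪gradient g x, w⟫
        = g x + ⟪gradient g x, z - x⟫ := by rw [e3]; ring
      _ ≤ g z := hfo
      _ ≤ g y + ⟪gradient g y, z - y⟫ + L/2 * ‖z - y‖^2 := hdes
      _ = g y - (1/L) * ⟪gradient g y, w⟫ + L/2 * ((1/L)^2 * ‖w‖^2) := by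
          rw [e1, e2]; ring
  have hLL : L ≠ 0 := hL.ne'
  have : (1/L) * ‖w‖^2 - L/2 * ((1/L)^2 * ‖w‖^2) = 1/(2*L) * ‖w‖^2 := by
    field_simp; ring
  -- comb rearranged: 1/(2L) ‖w‖² ≤ g y - g x - ⟪∇g x, y-x⟫
  have final : 1/(2*L) * ‖w‖^2 ≤ g y - g x - ⟪gradient g x, y - x⟫ := by
    nlinarith [comb, e4, this]
  have := mul_le_mul_of_nonneg_left final (by positivity : (0:ℝ) ≤ 2*L)
  calc ‖w‖^2 = 2*L * (1/(2*L) * ‖w‖^2) := by field_simp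
    _ ≤ 2*L * (g y - g x - ⟪gradient g x, y - x⟫) := this

end Helpers
/-- SVRG variance bound in the convex setting:
`(1/n) ∑ ‖∇f_i(x̄) − ∇f_i(x)‖² ≤ 4 L_max (f(x) − f(x⋆) + f(x̄) − f(x⋆))`. -/
theorem svrg_convex_variance_bound
    {d n : ℕ} (hn : 0 < n)
    (f : Fin n → EuclideanSpace ℝ (Fin d) → ℝ)
    (Lmax : ℝ)
    (hconv : ∀ i, ConvexOn ℝ Set.univ (f i))
    (hdiff : ∀ i, Differentiable ℝ (f i))
    (hlip : ∀ i x y, ‖gradient (f i) x - gradient (f i) y‖ ≤ Lmax * ‖x - y‖)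
    (F : EuclideanSpace ℝ (Fin d) → ℝ)
    (hF : ∀ x, F x = (1 / (n : ℝ)) * ∑ i, f i x)
    (xstar : EuclideanSpace ℝ (Fin d))
    (hmin : ∀ x, F xstar ≤ F x)
    (hstar : gradient F xstar = 0) :
    ∀ x xbar : EuclideanSpace ℝ (Fin d),
      (1 / (n : ℝ)) * ∑ i, ‖gradient (f i) xbar - gradient (f i) x‖ ^ 2
        ≤ 4 * Lmax * (F x - F xstar + (F xbar - F xstar)) := by
  intro x xbar
  by_cases htriv : ∀ a b : EuclideanSpace ℝ (Fin d), a = b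
  · have h1 : xbar = x := htriv _ _
    have h2 : x = xstar := htriv _ _
    rw [h1, h2]
    simp
  · push_neg at htriv
    obtain ⟨a, b, hab⟩ := htriv
    have hab' : (0:ℝ) < ‖a - b‖ := by rwa [norm_pos_iff, sub_ne_zero]
    have hL0 : 0 ≤ Lmax := by
      by_contra h
      push_neg at h
      have := (norm_nonneg _).trans (hlip ⟨0, hn⟩ a b)
      nlinarith
    have hn' : (0:ℝ) < n := by exact_mod_cast hn
    rcases eq_or_lt_of_le hL0 with hL | hL
    · -- Lmax = 0
      have hzero : ∑ i, ‖gradient (f i) xbar - gradient (f i) x‖ ^ 2 = 0 := by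
        apply Finset.sum_eq_zero
        intro i _
        have h1 := hlip i xbar x
        rw [← hL, zero_mul] at h1
        have h2 := le_antisymm h1 (norm_nonneg _)
        rw [norm_eq_zero] at h2
        rw [h2, norm_zero]
        ring
      rw [hzero, ← hL]
      simp
    · -- main case : Lmax > 0
      set w : Fin n → EuclideanSpace ℝ (Fin d) := fun i => gradient (f i) xstar with hwdef
      have hfd : ∀ i, HasFDerivAt (f i) (InnerProductSpace.toDual ℝ _ (w i)) xstar :=
        fun i => ((hdiff i xstar).hasGradientAt).hasFDerivAt
      have hsum : HasFDerivAt (fun z => ∑ i, f i z)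
          (∑ i, InnerProductSpace.toDual ℝ _ (w i)) xstar :=
        HasFDerivAt.fun_sum fun i _ => hfd i
      have hFd : HasFDerivAt F
          ((1/(n:ℝ)) • ∑ i, InnerProductSpace.toDual ℝ _ (w i)) xstar := by
        have hFe : F = fun z => (1/(n:ℝ)) * ∑ i, f i z := funext hF
        rw [hFe]
        exact hsum.const_mul _
      have hFg : HasGradientAt F ((1/(n:ℝ)) • ∑ i, w i) xstar := by
        rw [hasGradientAt_iff_hasFDerivAt]
        have hT : InnerProductSpace.toDual ℝ (EuclideanSpace ℝ (Fin d)) ((1/(n:ℝ)) • ∑ i, w i)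
            = (1/(n:ℝ)) • ∑ i, InnerProductSpace.toDual ℝ _ (w i) := by
          simp [map_smul, map_sum]
        rw [hT]; exact hFd
      have hSz : ∑ i, w i = 0 := by
        have h0 : ((1:ℝ)/n) • ∑ i, w i = 0 := by
          rw [← hFg.gradient, hstar]
        rcases smul_eq_zero.mp h0 with h | h
        · exact absurd h (by positivity)
        · exact h
      have hA : ∀ (y : EuclideanSpace ℝ (Fin d)) i,
          ‖gradient (f i) y - w i‖ ^ 2
            ≤ 2 * Lmax * (f i y - f i xstar - @inner ℝ _ _ (w i) (y - xstar)) :=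
        fun y i => svrg_key (f i) (hconv i) (hdiff i) Lmax hL (hlip i) xstar y
      have hinner1 : ∑ i, @inner ℝ _ _ (w i) (xbar - xstar) = 0 := by
        rw [← sum_inner, hSz, inner_zero_left]
      have hinner2 : ∑ i, @inner ℝ _ _ (w i) (x - xstar) = 0 := by
        rw [← sum_inner, hSz, inner_zero_left]
      have hsum_bound : ∑ i, ‖gradient (f i) xbar - gradient (f i) x‖ ^ 2
          ≤ ∑ i, (4 * Lmax * (f i xbar - f i xstar - @inner ℝ _ _ (w i) (xbar - xstar))
              + 4 * Lmax * (f i x - f i xstar - @inner ℝ _ _ (w i) (x - xstar))) := by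
        apply Finset.sum_le_sum
        intro i _
        have h1 : ‖gradient (f i) xbar - gradient (f i) x‖
            ≤ ‖gradient (f i) xbar - w i‖ + ‖gradient (f i) x - w i‖ := by
          have he : gradient (f i) xbar - gradient (f i) x
              = (gradient (f i) xbar - w i) - (gradient (f i) x - w i) := by abel
          rw [he]; exact norm_sub_le _ _
        have hC : ‖gradient (f i) xbar - gradient (f i) x‖ ^ 2
            ≤ 2 * ‖gradient (f i) xbar - w i‖ ^ 2 + 2 * ‖gradient (f i) x - w i‖ ^ 2 := by
          have hsq := mul_self_le_mul_self
            (norm_nonneg (gradient (f i) xbar - gradient (f i) x)) h1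
          nlinarith [sq_nonneg (‖gradient (f i) xbar - w i‖ - ‖gradient (f i) x - w i‖), hsq]
        have hb1 := hA xbar i
        have hb2 := hA x i
        linarith
      have e1 : ∑ i, (f i xbar - f i xstar - @inner ℝ _ _ (w i) (xbar - xstar))
          = (∑ i, f i xbar) - ∑ i, f i xstar := by
        rw [Finset.sum_sub_distrib, Finset.sum_sub_distrib, hinner1, sub_zero]
      have e2 : ∑ i, (f i x - f i xstar - @inner ℝ _ _ (w i) (x - xstar))
          = (∑ i, f i x) - ∑ i, f i xstar := by
        rw [Finset.sum_sub_distrib, Finset.sum_sub_distrib, hinner2, sub_zero]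
      have hsum_eq : ∑ i, (4 * Lmax * (f i xbar - f i xstar - @inner ℝ _ _ (w i) (xbar - xstar))
              + 4 * Lmax * (f i x - f i xstar - @inner ℝ _ _ (w i) (x - xstar)))
          = 4 * Lmax * ((∑ i, f i xbar) - ∑ i, f i xstar)
            + 4 * Lmax * ((∑ i, f i x) - ∑ i, f i xstar) := by
        rw [Finset.sum_add_distrib, ← Finset.mul_sum, ← Finset.mul_sum, e1, e2]
      calc (1 / (n:ℝ)) * ∑ i, ‖gradient (f i) xbar - gradient (f i) x‖ ^ 2
          ≤ (1 / (n:ℝ)) * (4 * Lmax * ((∑ i, f i xbar) - ∑ i, f i xstar)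
            + 4 * Lmax * ((∑ i, f i x) - ∑ i, f i xstar)) := by
            apply mul_le_mul_of_nonneg_left _ (by positivity)
            rw [← hsum_eq]
            exact hsum_bound
        _ = 4 * Lmax * (F x - F xstar + (F xbar - F xstar)) := by
            rw [hF x, hF xbar, hF xstar]; ring
end
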